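/- arXiv:1808.07841 — 3 statements merged into one kernel-verified Lean document; each statement's English description precedes it below -/
import Mathlib

section
/- Let r₀ > 0, T > 0, m > 0, set A₀ = 4π·r₀², and for each i ∈ ℕ let F_i : [0,T] → ℝ with associated m_i : [0,T] → ℝ defined by m_i(t) = √(A₀·e^t/(16π)³)·(16π − F_i(t)). Assume each m_i is nondecreasing on [0,T], m_i(T) − m_i(0) → 0, and m_i(0) → m as i → ∞. Then for every t ∈ [0,T], F_i(t)/(A₀·e^t) → (4/r₀²)·(1 − (2m/r₀)·e^{−t/2})·e^{−t} as i → ∞. -/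
open Real Set Filter

/-!
The Hawking mass determines the average of `H²` exactly: solving the definition of `m_H` for
`∫ H²` gives `⨍ H² = (4/r₀²)(1 - (2 m_H / r₀) e^{-t/2}) e^{-t}`, an affine function of `m_H`.
So it suffices that `m_i(t) → m`, which follows by squeezing the monotone `m_i(t)` between
`m_i(0)` and `m_i(T)`, both of which tend to `m`.
-/

theorem Filter.Tendsto.of_monotoneOn_Icc {ι : Type*} {l : Filter ι} {f : ι → ℝ → ℝ}
    {a b t m : ℝ} (hf : ∀ i, MonotoneOn (f i) (Icc a b)) (ht : t ∈ Icc a b)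
    (ha : Tendsto (fun i => f i a) l (nhds m))
    (hdiff : Tendsto (fun i => f i b - f i a) l (nhds 0)) :
    Tendsto (fun i => f i t) l (nhds m) := by
  have hab : a ≤ b := ht.1.trans ht.2
  have hb : Tendsto (fun i => f i b) l (nhds m) := by
    simpa using hdiff.add ha
  exact tendsto_of_tendsto_of_tendsto_of_le_of_le ha hb
    (fun i => hf i (left_mem_Icc.2 hab) ht ht.1) (fun i => hf i ht (right_mem_Icc.2 hab) ht.2)

theorem exp_eq_exp_half_sq (t : ℝ) : exp t = exp (t / 2) ^ 2 := by
  rw [← exp_nat_mul]; ring_nf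

theorem sqrt_sphereArea_mul_exp_div_eq {r : ℝ} (hr : 0 ≤ r) (t : ℝ) :
    √(4 * π * r ^ 2 * exp t / (16 * π) ^ 3) = r * exp (t / 2) / (32 * π) := by
  rw [show 4 * π * r ^ 2 * exp t / (16 * π) ^ 3 = (r * exp (t / 2) / (32 * π)) ^ 2 by
    rw [exp_eq_exp_half_sq]; field_simp; ring]
  exact sqrt_sq (by positivity)

theorem average_eq_of_hawkingMass {r t F M : ℝ} (hr : 0 < r)
    (hM : M = √(4 * π * r ^ 2 * exp t / (16 * π) ^ 3) * (16 * π - F)) :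
    F / (4 * π * r ^ 2 * exp t) = 4 / r ^ 2 * (1 - 2 * M / r * exp (-t / 2)) * exp (-t) := by
  rw [sqrt_sphereArea_mul_exp_div_eq hr.le] at hM
  subst hM
  rw [neg_div, exp_neg, exp_neg, exp_eq_exp_half_sq t]
  field_simp
  ring

theorem stmt2_general (r₀ T m : ℝ) (hr₀ : 0 < r₀)
    (A₀ : ℝ) (hA₀ : A₀ = 4 * π * r₀ ^ 2)
    (F mH : ℕ → ℝ → ℝ)
    (hmH : ∀ i t, mH i t = Real.sqrt (A₀ * Real.exp t / (16 * π) ^ 3) * (16 * π - F i t))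
    (hmono : ∀ i, MonotoneOn (mH i) (Icc (0 : ℝ) T))
    (hdiff : Tendsto (fun i => mH i T - mH i 0) atTop (nhds 0))
    (h0 : Tendsto (fun i => mH i 0) atTop (nhds m)) :
    ∀ t ∈ Icc (0 : ℝ) T,
      Tendsto (fun i => F i t / (A₀ * Real.exp t)) atTop
        (nhds ((4 / r₀ ^ 2) * (1 - (2 * m / r₀) * Real.exp (-t / 2)) * Real.exp (-t))) := by
  intro t ht
  subst hA₀
  have hmass : Tendsto (fun i => mH i t) atTop (nhds m) := h0.of_monotoneOn_Icc hmono ht hdiff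
  have haverage : (fun i => F i t / (4 * π * r₀ ^ 2 * exp t))
      = fun i => 4 / r₀ ^ 2 * (1 - 2 * mH i t / r₀ * exp (-t / 2)) * exp (-t) :=
    funext fun i => average_eq_of_hawkingMass hr₀ (hmH i t)
  rw [haverage]
  exact ((((hmass.const_mul 2).div_const r₀).mul_const _).const_sub 1).const_mul _ |>.mul_const _

/-- RPI-stability setting: if the (abstract) Hawking masses `mH i` are
nondecreasing, `mH i T - mH i 0 → 0`, and `mH i 0 → m > 0`, then the averages
`F i t / (A₀ e^t)` converge to `(4/r₀²)(1 - (2m/r₀)e^{-t/2})e^{-t}`. -/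
theorem stmt2 (r₀ T m : ℝ) (hr₀ : 0 < r₀) (hT : 0 < T) (hmpos : 0 < m)
    (A₀ : ℝ) (hA₀ : A₀ = 4 * π * r₀ ^ 2)
    (F mH : ℕ → ℝ → ℝ)
    (hmH : ∀ i t, mH i t = Real.sqrt (A₀ * Real.exp t / (16 * π) ^ 3) * (16 * π - F i t))
    (hmono : ∀ i, MonotoneOn (mH i) (Icc (0 : ℝ) T))
    (hdiff : Tendsto (fun i => mH i T - mH i 0) atTop (nhds 0))
    (h0 : Tendsto (fun i => mH i 0) atTop (nhds m)) :
    ∀ t ∈ Icc (0 : ℝ) T,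
      Tendsto (fun i => F i t / (A₀ * Real.exp t)) atTop
        (nhds ((4 / r₀ ^ 2) * (1 - (2 * m / r₀) * Real.exp (-t / 2)) * Real.exp (-t))) :=
  stmt2_general r₀ T m hr₀ A₀ hA₀ F mH hmH hmono hdiff h0
end

section
/- Let r₀ > 0, T > 0, set A₀ = 4π·r₀², and for each i ∈ ℕ let F_i : [0,T] → ℝ be continuously differentiable, with associated m_i : [0,T] → ℝ defined by m_i(t) = √(A₀·e^t/(16π)³)·(16π − F_i(t)). Assume each m_i is nondecreasing on [0,T], m_i(0) ≥ 0 for all i, and m_i(T) → 0 as i → ∞. Then ∫₀^T |F_i'(t)| dt → 0 as i → ∞; that is, the derivatives F_i' converge to 0 in L¹([0,T]). -/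
/-!
Write `u = 16π - F`, so that the Hawking mass is `K e^{t/2} u` with a constant `K > 0`.
Monotonicity of the mass and `m(0) ≥ 0` give `u ≥ 0` and, differentiating, `F' ≤ u / 2`;
hence `|F'| ≤ u - F'`, and `e^t (u - F')` is the derivative of `e^t u`. Integrating,
`∫₀ᵀ |F'| ≤ e^T u(T) - u(0) ≤ e^T u(T)`, a fixed multiple of `m(T)`.
-/

open Real Set Filter

lemma abs_le_sub_self_of_le_half {x u : ℝ} (hu : 0 ≤ u) (hx : x ≤ u / 2) : |x| ≤ u - x := by
  rcases abs_cases x with ⟨h, _⟩ | ⟨h, _⟩ <;> rw [h] <;> linarith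

lemma hasDerivWithinAt_exp_mul_const_sub {F : ℝ → ℝ} {F' : ℝ} {s : Set ℝ} {t : ℝ}
    (hF : HasDerivWithinAt F F' s t) (k c : ℝ) :
    HasDerivWithinAt (fun t => exp (k * t) * (c - F t)) (exp (k * t) * (k * (c - F t) - F'))
      s t := by
  have hexp : HasDerivAt (fun t => exp (k * t)) (exp (k * t) * k) t := by
    simpa using ((hasDerivAt_id t).const_mul k).exp
  exact (hexp.hasDerivWithinAt.mul (hF.const_sub c)).congr_deriv (by ring)

section WeightedMonotone

variable {F : ℝ → ℝ} {a b c : ℝ}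

lemma const_sub_nonneg_of_monotoneOn_exp_mul
    (hmono : MonotoneOn (fun t => exp (t / 2) * (c - F t)) (Icc a b)) (ha : 0 ≤ c - F a)
    {t : ℝ} (ht : t ∈ Icc a b) : 0 ≤ c - F t := by
  have hat : exp (a / 2) * (c - F a) ≤ exp (t / 2) * (c - F t) :=
    hmono (left_mem_Icc.2 (ht.1.trans ht.2)) ht ht.1
  exact (mul_nonneg_iff_of_pos_left (exp_pos _)).1 ((by positivity : (0 : ℝ) ≤ _).trans hat)

lemma derivWithin_le_half_of_monotoneOn_exp_mul (hab : a < b)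
    (hF : DifferentiableOn ℝ F (Icc a b))
    (hmono : MonotoneOn (fun t => exp (t / 2) * (c - F t)) (Icc a b))
    {t : ℝ} (ht : t ∈ Icc a b) : derivWithin F (Icc a b) t ≤ (c - F t) / 2 := by
  have hderiv := hasDerivWithinAt_exp_mul_const_sub (hF t ht).hasDerivWithinAt (1 / 2) c
  simp only [one_div_mul_eq_div] at hderiv
  have hnonneg := hmono.derivWithin_nonneg (𝕜 := ℝ) (x := t)
  rw [hderiv.derivWithin (uniqueDiffOn_Icc hab t ht)] at hnonneg
  nlinarith [(mul_nonneg_iff_of_pos_left (exp_pos (t / 2))).1 hnonneg]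

theorem integral_abs_derivWithin_le_of_monotoneOn_exp_mul (hab : a < b)
    (hF : ContDiffOn ℝ 1 F (Icc a b))
    (hmono : MonotoneOn (fun t => exp (t / 2) * (c - F t)) (Icc a b)) (ha : 0 ≤ c - F a) :
    ∫ t in a..b, |derivWithin F (Icc a b) t| ≤ exp (b - a) * (c - F b) := by
  set F' := derivWithin F (Icc a b)
  have hFd : DifferentiableOn ℝ F (Icc a b) := hF.differentiableOn one_ne_zero
  have hF'c : ContinuousOn F' (Icc a b) := hF.continuousOn_derivWithin (uniqueDiffOn_Icc hab) le_rfl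
  have hint : IntervalIntegrable (fun t => exp t * ((c - F t) - F' t)) MeasureTheory.volume a b :=
    (continuous_exp.continuousOn.mul ((continuousOn_const.sub hF.continuousOn).sub hF'c))
      |>.intervalIntegrable_of_Icc hab.le
  have hpointwise : ∀ t ∈ Icc a b, exp a * |F' t| ≤ exp t * ((c - F t) - F' t) := fun t ht =>
    mul_le_mul (exp_le_exp.2 ht.1)
      (abs_le_sub_self_of_le_half (const_sub_nonneg_of_monotoneOn_exp_mul hmono ha ht)
        (derivWithin_le_half_of_monotoneOn_exp_mul hab hFd hmono ht))
      (abs_nonneg _) (exp_pos _).le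
  have hftc :
      ∫ t in a..b, exp t * ((c - F t) - F' t) = exp b * (c - F b) - exp a * (c - F a) := by
    refine intervalIntegral.integral_eq_sub_of_hasDeriv_right_of_le hab.le
      (continuous_exp.continuousOn.mul (continuousOn_const.sub hF.continuousOn))
      (fun t ht => ?_) hint
    have ht' : t ∈ Icc a b := Ioo_subset_Icc_self ht
    have := hasDerivWithinAt_exp_mul_const_sub (hFd t ht').hasDerivWithinAt 1 c
    simp only [one_mul] at this
    exact (this.hasDerivAt (Icc_mem_nhds ht.1 ht.2)).hasDerivWithinAt
  have hmain : exp a * ∫ t in a..b, |F' t| ≤ exp b * (c - F b) := by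
    calc exp a * ∫ t in a..b, |F' t| = ∫ t in a..b, exp a * |F' t| :=
          (intervalIntegral.integral_const_mul _ _).symm
      _ ≤ ∫ t in a..b, exp t * ((c - F t) - F' t) :=
          intervalIntegral.integral_mono_on hab.le
            ((hF'c.abs.intervalIntegrable_of_Icc hab.le).const_mul _) hint hpointwise
      _ ≤ exp b * (c - F b) := by
          rw [hftc]; linarith [mul_nonneg (exp_pos a).le ha]
  rw [exp_sub, div_mul_eq_mul_div, le_div_iff₀ (exp_pos a), mul_comm]
  exact hmain

end WeightedMonotone

/-- in the PMT-stability setting, the derivatives `F_i'` converge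
to `0` in `L¹([0,T])`. -/
theorem stmt4 (r₀ T : ℝ) (hr₀ : 0 < r₀) (hT : 0 < T)
    (A₀ : ℝ) (hA₀ : A₀ = 4 * π * r₀ ^ 2)
    (F mH : ℕ → ℝ → ℝ)
    (hF : ∀ i, ContDiffOn ℝ 1 (F i) (Icc (0 : ℝ) T))
    (hm : ∀ i t, mH i t = Real.sqrt (A₀ * Real.exp t / (16 * π) ^ 3) * (16 * π - F i t))
    (hmono : ∀ i, MonotoneOn (mH i) (Icc (0 : ℝ) T))
    (hm0 : ∀ i, 0 ≤ mH i 0)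
    (hmT : Tendsto (fun i => mH i T) atTop (nhds 0)) :
    Tendsto (fun i => ∫ t in (0 : ℝ)..T, |derivWithin (F i) (Icc (0 : ℝ) T) t|)
      atTop (nhds 0) := by
  set K := √(A₀ / (16 * π) ^ 3)
  have hK : 0 < K := sqrt_pos.2 (by rw [hA₀]; positivity)
  have hmK : ∀ i t, mH i t = K * (exp (t / 2) * (16 * π - F i t)) := fun i t => by
    rw [hm, exp_half, ← mul_assoc, ← sqrt_mul (by rw [hA₀]; positivity), div_mul_eq_mul_div]
  have hbound : ∀ i, ∫ t in (0 : ℝ)..T, |derivWithin (F i) (Icc 0 T) t| ≤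
      (exp (T / 2) / K) * mH i T := fun i => by
    have hmono' : MonotoneOn (fun t => exp (t / 2) * (16 * π - F i t)) (Icc 0 T) :=
      fun x hx y hy hxy => le_of_mul_le_mul_left (by simpa only [hmK] using hmono i hx hy hxy) hK
    have h0 : 0 ≤ 16 * π - F i 0 := by simpa [hmK, hK] using hm0 i
    calc _ ≤ exp (T - 0) * (16 * π - F i T) :=
          integral_abs_derivWithin_le_of_monotoneOn_exp_mul hT (hF i) hmono' h0
      _ = (exp (T / 2) / K) * mH i T := by
          rw [hmK, sub_zero, ← mul_assoc, div_mul_cancel₀ _ hK.ne', ← mul_assoc, ← exp_add,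
            add_halves]
  refine tendsto_of_tendsto_of_tendsto_of_le_of_le tendsto_const_nhds
    (by simpa using hmT.const_mul (exp (T / 2) / K))
    (fun i => intervalIntegral.integral_nonneg hT.le fun _ _ => abs_nonneg _) hbound
end

section
/- Let r₀ > 0, T > 0, m > 0, set A₀ = 4π·r₀², and for each i ∈ ℕ let F_i : [0,T] → ℝ be continuously differentiable, with associated m_i : [0,T] → ℝ defined by m_i(t) = √(A₀·e^t/(16π)³)·(16π − F_i(t)). Assume each m_i is nondecreasing on [0,T], m_i(T) − m_i(0) → 0, and m_i(0) → m as i → ∞. Then ∫₀^T |F_i'(t) − (16π/r₀)·m·e^{−t/2}| dt → 0 as i → ∞; that is, F_i' converges in L¹([0,T]) to the function t ↦ (16π/r₀)·m·e^{−t/2}. -/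
/-!
Write `c t = (r₀ / 32π) e^{t/2}`, so that `√(A₀ e^t / (16π)³) = c t` and `m_i = c (16π - F_i)`.
Then `m_i' = m_i / 2 - c F_i'`, hence
`F_i' - (16π / r₀) m e^{-t/2} = ((m_i - m) / 2 - m_i') / c` with `c ≥ r₀ / 32π` on `[0, T]`.
Both terms go to zero in `L¹` because `m_i` is monotone: `|m_i - m|` is bounded on `[0, T]` by
`|m_i(0) - m| + (m_i(T) - m_i(0))`, and `∫ |m_i'| = ∫ m_i' ≤ m_i(T) - m_i(0)`.
-/

open Real Set Filter MeasureTheory Topology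

namespace MonotoneOn

variable {u : ℝ → ℝ} {a b : ℝ}

lemma abs_sub_le (hu : MonotoneOn u (Icc a b)) {t : ℝ} (ht : t ∈ Icc a b) (m : ℝ) :
    |u t - m| ≤ |u a - m| + (u b - u a) := by
  have hab : a ≤ b := ht.1.trans ht.2
  have hat : u a ≤ u t := hu (left_mem_Icc.2 hab) ht ht.1
  have htb : u t ≤ u b := hu ht (right_mem_Icc.2 hab) ht.2
  rw [abs_le]
  constructor <;> linarith [neg_abs_le (u a - m), le_abs_self (u a - m)]

lemma integral_abs_deriv_le (hu : MonotoneOn u (Icc a b)) (hab : a ≤ b) :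
    ∫ t in a..b, |deriv u t| ≤ u b - u a := by
  have hnonneg : ∀ t ∈ Ioo a b, 0 ≤ deriv u t := fun t ht => by
    rw [← derivWithin_of_mem_nhds (Icc_mem_nhds ht.1 ht.2)]
    exact hu.derivWithin_nonneg
  have habs : ∫ t in a..b, |deriv u t| = ∫ t in a..b, deriv u t := by
    rw [intervalIntegral.integral_of_le hab, intervalIntegral.integral_of_le hab,
      integral_Ioc_eq_integral_Ioo, integral_Ioc_eq_integral_Ioo]
    exact setIntegral_congr_fun measurableSet_Ioo fun t ht => abs_of_nonneg (hnonneg t ht)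
  rw [habs]
  rw [← uIcc_of_le hab] at hu
  have hmem := hu.intervalIntegral_deriv_mem_uIcc
  rw [uIcc_of_le (sub_nonneg.2 (hu left_mem_uIcc right_mem_uIcc hab))] at hmem
  exact hmem.2

end MonotoneOn

section MonotoneSequence

variable {u : ℕ → ℝ → ℝ} {a b m : ℝ}

lemma tendsto_integral_abs_sub_of_monotoneOn (hab : a ≤ b)
    (hu : ∀ i, MonotoneOn (u i) (Icc a b))
    (hosc : Tendsto (fun i => u i b - u i a) atTop (𝓝 0))
    (hstart : Tendsto (fun i => u i a) atTop (𝓝 m)) :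
    Tendsto (fun i => ∫ t in a..b, |u i t - m|) atTop (𝓝 0) := by
  have hbound : Tendsto (fun i => (|u i a - m| + (u i b - u i a)) * |b - a|) atTop (𝓝 0) := by
    simpa using (((hstart.sub_const m).abs).add hosc).mul_const |b - a|
  refine squeeze_zero_norm (fun i => ?_) hbound
  refine intervalIntegral.norm_integral_le_of_norm_le_const fun t ht => ?_
  rw [Real.norm_eq_abs, abs_abs]
  rw [uIoc_of_le hab] at ht
  exact (hu i).abs_sub_le (Ioc_subset_Icc_self ht) m

lemma tendsto_integral_abs_deriv_of_monotoneOn (hab : a ≤ b)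
    (hu : ∀ i, MonotoneOn (u i) (Icc a b))
    (hosc : Tendsto (fun i => u i b - u i a) atTop (𝓝 0)) :
    Tendsto (fun i => ∫ t in a..b, |deriv (u i) t|) atTop (𝓝 0) :=
  squeeze_zero (fun _ => intervalIntegral.integral_nonneg hab fun _ _ => abs_nonneg _)
    (fun i => (hu i).integral_abs_deriv_le hab) hosc

end MonotoneSequence

lemma tendsto_integral_abs_of_abs_le {f g h : ℕ → ℝ → ℝ} {a b K : ℝ} (hab : a ≤ b)
    (hg : ∀ i, IntervalIntegrable (g i) volume a b)
    (hh : ∀ i, IntervalIntegrable (h i) volume a b)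
    (hle : ∀ i, ∀ t ∈ Ioo a b, |f i t| ≤ K * (|g i t| + |h i t|))
    (hg0 : Tendsto (fun i => ∫ t in a..b, |g i t|) atTop (𝓝 0))
    (hh0 : Tendsto (fun i => ∫ t in a..b, |h i t|) atTop (𝓝 0)) :
    Tendsto (fun i => ∫ t in a..b, |f i t|) atTop (𝓝 0) := by
  have hsum : ∀ i, ∫ t in a..b, K * (|g i t| + |h i t|)
      = K * ((∫ t in a..b, |g i t|) + ∫ t in a..b, |h i t|) := fun i => by
    rw [intervalIntegral.integral_const_mul, intervalIntegral.integral_add (hg i).abs (hh i).abs]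
  refine squeeze_zero (fun _ => intervalIntegral.integral_nonneg hab fun _ _ => abs_nonneg _)
    (fun i => ?_) (by simpa using (hg0.add hh0).const_mul K)
  rw [← hsum, intervalIntegral.integral_of_le hab, intervalIntegral.integral_of_le hab,
    integral_Ioc_eq_integral_Ioo, integral_Ioc_eq_integral_Ioo]
  refine integral_mono_of_nonneg (ae_of_all _ fun t => abs_nonneg _) ?_
    ((ae_restrict_iff' measurableSet_Ioo).2 (ae_of_all _ (hle i)))
  exact (((hg i).abs.add (hh i).abs).const_mul K).1.mono_set Ioo_subset_Ioc_self

lemma sqrt_area_div_cube {r₀ : ℝ} (hr₀ : 0 ≤ r₀) (t : ℝ) :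
    √(4 * π * r₀ ^ 2 * exp t / (16 * π) ^ 3) = r₀ / (32 * π) * exp (t / 2) := by
  rw [← sqrt_sq (by positivity : 0 ≤ r₀ / (32 * π) * exp (t / 2))]
  congr 1
  have hexp : exp t = exp (t / 2) ^ 2 := by rw [← exp_nat_mul]; ring_nf
  rw [hexp]
  field_simp
  ring

lemma hasDerivAt_mul_exp_half_mul_sub {F : ℝ → ℝ} {F' κ L t : ℝ} (hF : HasDerivAt F F' t) :
    HasDerivAt (fun s => κ * exp (s / 2) * (L - F s))
      (κ * exp (t / 2) * (L - F t) / 2 - κ * exp (t / 2) * F') t := by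
  have hexp : HasDerivAt (fun s => κ * exp (s / 2)) (κ * exp (t / 2) / 2) t :=
    ((((hasDerivAt_id' t).div_const 2).exp).const_mul κ).congr_deriv (by ring)
  exact (hexp.mul (hF.const_sub L)).congr_deriv (by ring)

lemma abs_sub_div_le {c c₀ x x' y m : ℝ} (hc₀ : 0 < c₀) (hc : c₀ ≤ c)
    (hx' : x' = x / 2 - c * y) :
    |y - m / (2 * c)| ≤ c₀⁻¹ * (|x - m| + |x'|) := by
  have hcpos : 0 < c := hc₀.trans_le hc
  have hy : y - m / (2 * c) = ((x - m) / 2 - x') / c := by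
    rw [hx']; field_simp; ring
  calc |y - m / (2 * c)| = |(x - m) / 2 - x'| / c := by rw [hy, abs_div, abs_of_pos hcpos]
    _ ≤ (|x - m| + |x'|) / c := by
        gcongr
        calc |(x - m) / 2 - x'| ≤ |(x - m) / 2| + |x'| := abs_sub _ _
          _ ≤ |x - m| + |x'| := by rw [abs_div, abs_two]; linarith [abs_nonneg (x - m)]
    _ ≤ (|x - m| + |x'|) / c₀ := by gcongr
    _ = c₀⁻¹ * (|x - m| + |x'|) := by rw [div_eq_inv_mul]

theorem stmt5_general (r₀ T m : ℝ) (hr₀ : 0 < r₀) (hT : 0 < T)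
    (A₀ : ℝ) (hA₀ : A₀ = 4 * π * r₀ ^ 2)
    (F mH : ℕ → ℝ → ℝ)
    (hF : ∀ i, ContDiffOn ℝ 1 (F i) (Icc (0 : ℝ) T))
    (hmH : ∀ i t, mH i t = Real.sqrt (A₀ * Real.exp t / (16 * π) ^ 3) * (16 * π - F i t))
    (hmono : ∀ i, MonotoneOn (mH i) (Icc (0 : ℝ) T))
    (hdiff : Tendsto (fun i => mH i T - mH i 0) atTop (nhds 0))
    (h0 : Tendsto (fun i => mH i 0) atTop (nhds m)) :
    Tendsto (fun i => ∫ t in (0 : ℝ)..T,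
        |derivWithin (F i) (Icc (0 : ℝ) T) t - (16 * π / r₀) * m * Real.exp (-t / 2)|)
      atTop (nhds 0) := by
  subst hA₀
  set c : ℝ → ℝ := fun t => r₀ / (32 * π) * exp (t / 2) with hc
  have hmH_eq : ∀ i, mH i = fun t => c t * (16 * π - F i t) := fun i =>
    funext fun t => by rw [hmH, sqrt_area_div_cube hr₀.le]
  have hderiv : ∀ i, ∀ t ∈ Ioo 0 T,
      deriv (mH i) t = mH i t / 2 - c t * derivWithin (F i) (Icc 0 T) t := by
    intro i t ht
    have hFt := (((hF i).differentiableOn one_ne_zero t (Ioo_subset_Icc_self ht)).hasDerivWithinAt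
      ).hasDerivAt (Icc_mem_nhds ht.1 ht.2)
    rw [hmH_eq i]
    exact (hasDerivAt_mul_exp_half_mul_sub hFt).deriv
  have htarget : ∀ t, 16 * π / r₀ * m * exp (-t / 2) = m / (2 * c t) := fun t => by
    rw [hc, neg_div, exp_neg]
    field_simp
    ring
  have hmono' : ∀ i, MonotoneOn (mH i) (uIcc 0 T) := by
    rw [uIcc_of_le hT.le]; exact hmono
  refine tendsto_integral_abs_of_abs_le (K := (r₀ / (32 * π))⁻¹) (g := fun i t => mH i t - m)
    (h := fun i => deriv (mH i)) hT.le
    (fun i => (hmono' i).intervalIntegrable.sub intervalIntegrable_const)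
    (fun i => (hmono' i).intervalIntegrable_deriv) (fun i t ht => ?_)
    (tendsto_integral_abs_sub_of_monotoneOn hT.le hmono hdiff h0)
    (tendsto_integral_abs_deriv_of_monotoneOn hT.le hmono hdiff)
  rw [htarget]
  exact abs_sub_div_le (by positivity)
    (le_mul_of_one_le_right (by positivity) (one_le_exp (by linarith [ht.1]))) (hderiv i t ht)

/-- in the RPI-stability setting, the derivatives `F_i'` converge
in `L¹([0,T])` to `t ↦ (16π/r₀) m e^{-t/2}`. -/
theorem stmt5 (r₀ T m : ℝ) (hr₀ : 0 < r₀) (hT : 0 < T) (hmpos : 0 < m)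
    (A₀ : ℝ) (hA₀ : A₀ = 4 * π * r₀ ^ 2)
    (F mH : ℕ → ℝ → ℝ)
    (hF : ∀ i, ContDiffOn ℝ 1 (F i) (Icc (0 : ℝ) T))
    (hmH : ∀ i t, mH i t = Real.sqrt (A₀ * Real.exp t / (16 * π) ^ 3) * (16 * π - F i t))
    (hmono : ∀ i, MonotoneOn (mH i) (Icc (0 : ℝ) T))
    (hdiff : Tendsto (fun i => mH i T - mH i 0) atTop (nhds 0))
    (h0 : Tendsto (fun i => mH i 0) atTop (nhds m)) :
    Tendsto (fun i => ∫ t in (0 : ℝ)..T,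
        |derivWithin (F i) (Icc (0 : ℝ) T) t - (16 * π / r₀) * m * Real.exp (-t / 2)|)
      atTop (nhds 0) :=
  stmt5_general r₀ T m hr₀ hT A₀ hA₀ F mH hF hmH hmono hdiff h0
end
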